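/- arXiv:1603.09017 — 7 statements merged into one kernel-verified Lean document; each statement's English description precedes it below -/
import Mathlib

section
/- For an irreducible transition matrix P on a finite state space S, the tree weights satisfy the balance equation: for every j in S, the sum over i in S of Σ_i · p_{ij} equals Σ_j, where Σ_j is the sum over all spanning trees t of S rooted at j (edges directed toward j) of the product of p_{ik} over directed edges (i,k) of t. -/
open Finset

/-- A spanning forest of `S` with root set `R`, encoded as a successor function:
roots are fixed points, and every state eventually reaches `R` under iteration. -/
def IsForest {S : Type*} [Fintype S] [DecidableEq S] (R : Finset S) (f : S → S) : Prop :=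
  (∀ i ∈ R, f i = i) ∧ ∀ i : S, ∃ n : ℕ, f^[n] i ∈ R

/-- The `P`-weight of a forest: product of transition probabilities over its directed edges. -/
noncomputable def forestWt {S : Type*} [Fintype S] [DecidableEq S]
    (p : S → S → ℝ) (R : Finset S) (f : S → S) : ℝ :=
  ∏ i ∈ Rᶜ, p i (f i)

open Classical in
/-- `w p R`: the total `P`-weight of spanning forests with root set `R`. -/
noncomputable def w {S : Type*} [Fintype S] [DecidableEq S]
    (p : S → S → ℝ) (R : Finset S) : ℝ :=
  ∑ f : S → S, if IsForest R f then forestWt p R f else 0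

open Classical in
/-- `wroot p A i j`: total weight of forests with root set `A` in which the tree
containing `i` has root `j`. -/
noncomputable def wroot {S : Type*} [Fintype S] [DecidableEq S]
    (p : S → S → ℝ) (A : Finset S) (i j : S) : ℝ :=
  ∑ f : S → S, if IsForest A f ∧ ∃ n : ℕ, f^[n] i = j then forestWt p A f else 0

/-- `p` is a stochastic matrix. -/
def IsStochastic {S : Type*} [Fintype S] (p : S → S → ℝ) : Prop :=
  (∀ i j, 0 ≤ p i j) ∧ ∀ i, ∑ j, p i j = 1

/-- `p` is irreducible. -/
def PIrreducible {S : Type*} [Fintype S] [DecidableEq S] (p : S → S → ℝ) : Prop :=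
  ∀ i j : S, ∃ n : ℕ, 0 < ((Matrix.of p) ^ n) i j

/-- Weight of a path starting at `i` with successive states given by the list. -/
def wt {S : Type*} (p : S → S → ℝ) : S → List S → ℝ
  | _, [] => 1
  | i, j :: l => p i j * wt p j l

/-!
Both sides equal the total weight `∏ k, p k (g k)` of the maps `g : S → S` under which every
state reaches `j`: functional graphs with a single cycle, passing through `j`. Such a `g` arises
exactly once from a tree rooted at the predecessor `i` of `j` on the cycle by adding the edge
`i → j`, and exactly once from a tree rooted at `j` by adding an edge `j → m`; summing over `m`
costs nothing since the rows of `p` sum to `1`.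
-/

namespace Function

variable {S : Type*}

def ReachableFromAll (g : S → S) (i : S) : Prop :=
  ∀ k, ∃ n, g^[n] k = i

theorem exists_iterate_eq_of_eq_of_ne {f g : S → S} {i : S} (h : ∀ x, x ≠ i → f x = g x)
    {k : S} {n : ℕ} (hn : f^[n] k = i) : ∃ m, g^[m] k = i := by
  induction n generalizing k with
  | zero => exact ⟨0, hn⟩
  | succ n ih =>
    by_cases hk : k = i
    · exact ⟨0, hk⟩
    · rw [iterate_succ_apply, h k hk] at hn
      obtain ⟨m, hm⟩ := ih hn
      exact ⟨m + 1, hm⟩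

namespace ReachableFromAll

theorem of_eq_of_ne {f g : S → S} {i : S} (hf : ReachableFromAll f i)
    (h : ∀ x, x ≠ i → f x = g x) : ReachableFromAll g i := fun k =>
  have ⟨_, hn⟩ := hf k
  exists_iterate_eq_of_eq_of_ne h hn

theorem of_apply_eq {g : S → S} {i j : S} (hi : ReachableFromAll g i) (hij : g i = j) :
    ReachableFromAll g j := fun k =>
  have ⟨n, hn⟩ := hi k
  ⟨n + 1, by rw [iterate_succ_apply', hn, hij]⟩

theorem mem_periodicPts {g : S → S} {i : S} (hi : ReachableFromAll g i) : i ∈ periodicPts g :=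
  have ⟨n, hn⟩ := hi (g i)
  mk_mem_periodicPts n.succ_pos hn

/-- The states that every state reaches form the unique cycle of `g`; as `g` is injective on
its periodic points, exactly one of them is sent to `j`. -/
theorem existsUnique_apply_eq {g : S → S} {j : S} (hj : ReachableFromAll g j) :
    ∃! i, ReachableFromAll g i ∧ g i = j := by
  obtain ⟨n, hn⟩ := hj (g j)
  have hpred : g (g^[n] j) = j := by rwa [← iterate_succ_apply' g n j, iterate_succ_apply]
  have hreach : ReachableFromAll g (g^[n] j) := fun k =>
    have ⟨m, hm⟩ := hj k
    ⟨n + m, by rw [iterate_add_apply, hm]⟩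
  refine ⟨g^[n] j, ⟨hreach, hpred⟩, fun i ⟨hi, hij⟩ => ?_⟩
  exact (bijOn_periodicPts g).injOn hi.mem_periodicPts hreach.mem_periodicPts
    (hij.trans hpred.symm)

end ReachableFromAll

theorem reachableFromAll_update_self_iff [DecidableEq S] {g : S → S} {i m : S} :
    ReachableFromAll (update g i m) i ↔ ReachableFromAll g i :=
  ⟨fun h => h.of_eq_of_ne fun _ hx => update_of_ne hx _ _,
    fun h => h.of_eq_of_ne fun _ hx => (update_of_ne hx _ _).symm⟩

end Function

section

open Function

variable {S : Type*} [Fintype S] [DecidableEq S]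

theorem isForest_singleton_iff {i : S} {f : S → S} :
    IsForest {i} f ↔ f i = i ∧ ReachableFromAll f i := by
  simp only [IsForest, mem_singleton, forall_eq, ReachableFromAll]

open Classical in
theorem sum_ite_reachableFromAll_apply_eq {M : Type*} [AddCommMonoid M] (g : S → S) (j : S)
    (x : M) :
    ∑ i, (if ReachableFromAll g i ∧ g i = j then x else 0) =
      if ReachableFromAll g j then x else 0 := by
  split_ifs with hj
  · obtain ⟨i, hi, huniq⟩ := hj.existsUnique_apply_eq
    rw [Fintype.sum_eq_single i fun k hk => if_neg (mt (huniq k) hk), if_pos hi]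
  · exact sum_eq_zero fun i _ => if_neg fun hi => hj (hi.1.of_apply_eq hi.2)

open Classical in
theorem w_singleton_mul (p : S → S → ℝ) (i m : S) :
    w p {i} * p i m = ∑ g with ReachableFromAll g i ∧ g i = m, ∏ k, p k (g k) := by
  rw [w, sum_mul]
  simp_rw [ite_mul, zero_mul]
  rw [← sum_filter]
  refine sum_nbij' (update · i m) (update · i i) ?_ ?_ ?_ ?_ ?_
  · simp only [mem_filter, mem_univ, true_and, isForest_singleton_iff]
    exact fun f ⟨_, hf⟩ => ⟨reachableFromAll_update_self_iff.2 hf, update_self ..⟩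
  · simp only [mem_filter, mem_univ, true_and, isForest_singleton_iff]
    exact fun g ⟨hg, _⟩ => ⟨update_self .., reachableFromAll_update_self_iff.2 hg⟩
  · simp only [mem_filter, mem_univ, true_and, isForest_singleton_iff]
    exact fun f ⟨hfi, _⟩ => (update_idem ..).trans (update_eq_self_iff.2 hfi.symm)
  · simp only [mem_filter, mem_univ, true_and]
    exact fun g ⟨_, hgi⟩ => (update_idem ..).trans (update_eq_self_iff.2 hgi.symm)
  · intro f _
    rw [Fintype.prod_eq_mul_prod_compl i, update_self, mul_comm, forestWt]
    congr 1
    exact prod_congr rfl fun k hk => by rw [update_of_ne (by simpa using hk)]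

open Classical in
theorem sum_w_singleton_mul_apply_eq (p : S → S → ℝ) (j : S) :
    ∑ i, w p {i} * p i j = ∑ g with ReachableFromAll g j, ∏ k, p k (g k) := by
  simp_rw [w_singleton_mul, sum_filter]
  rw [sum_comm]
  simp_rw [sum_ite_reachableFromAll_apply_eq]

open Classical in
theorem sum_w_singleton_mul_self (p : S → S → ℝ) (j : S) :
    ∑ m, w p {j} * p j m = ∑ g with ReachableFromAll g j, ∏ k, p k (g k) := by
  simp_rw [w_singleton_mul, ← filter_filter]
  exact sum_fiberwise _ _ _

end

theorem tree_weight_balance_general {S : Type*} [Fintype S] [DecidableEq S]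
    (p : S → S → ℝ) (hs : IsStochastic p) (j : S) :
    ∑ i : S, w p {i} * p i j = w p {j} := by
  rw [sum_w_singleton_mul_apply_eq, ← sum_w_singleton_mul_self, ← mul_sum, hs.2 j, mul_one]

/-- Markov chain tree theorem balance equation: `∑ i, Σ_i p_{ij} = Σ_j`. -/
theorem tree_weight_balance {S : Type*} [Fintype S] [DecidableEq S]
    (p : S → S → ℝ) (hs : IsStochastic p) (hirr : PIrreducible p) (j : S) :
    ∑ i : S, w p {i} * p i j = w p {j} :=
  tree_weight_balance_general p hs j
end

section
/- Let P be a substochastic matrix indexed by S \ R (the restriction of a stochastic matrix to the complement of a nonempty set R ⊆ S). The following are equivalent: (1) the forest weight w(R) = Σ_{f: ROOTS(f)=R} Π_{(i,j)∈f} p_{ij} is strictly positive; (2) there exists a spanning forest of S with root set exactly R all of whose edges (i,j) satisfy p_{ij} > 0; (3) for every i ∈ S \ R there is a finite path from i to some r ∈ R with all transition probabilities positive. -/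
open Finset

/-!
A forest has positive weight iff each of its edges does, and `w(R)`, a sum of nonnegative
weights, is positive iff some forest has positive weight. Following a positive forest from `i`
gives a positive path to `R`. Conversely, let `d i` be the least length of a positive path from `i`
to `R`; for `i ∉ R` the first step `j` of a shortest path has `p i j > 0` and `d j < d i`, so
choosing such a `j` as successor of every `i ∉ R` yields a forest, since `d` decreases along it.
-/

section ForestWeight

variable {S : Type*} [Fintype S] [DecidableEq S] {p : S → S → ℝ} {R : Finset S}

theorem forestWt_pos_iff (hp : ∀ i j, 0 ≤ p i j) {f : S → S} :
    0 < forestWt p R f ↔ ∀ i ∉ R, 0 < p i (f i) := by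
  refine ⟨fun hpos i hi => (hp i (f i)).lt_of_ne fun hzero => hpos.ne' ?_,
    fun hpos => prod_pos fun i hi => hpos i (mem_compl.mp hi)⟩
  exact prod_eq_zero (mem_compl.mpr hi) hzero.symm

theorem w_pos_iff (hp : ∀ i j, 0 ≤ p i j) :
    0 < w p R ↔ ∃ f : S → S, IsForest R f ∧ 0 < forestWt p R f := by
  classical
  have hterm_nonneg (f : S → S) : 0 ≤ if IsForest R f then forestWt p R f else 0 := by
    split_ifs
    exacts [prod_nonneg fun i _ => hp i (f i), le_rfl]
  unfold w
  rw [sum_pos_iff_of_nonneg fun f _ => hterm_nonneg f]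
  refine exists_congr fun f => ?_
  by_cases hf : IsForest R f <;> simp [hf]

end ForestWeight

section Paths

variable {S : Type*} {p : S → S → ℝ}

def ReachesIn (p : S → S → ℝ) (R : Finset S) : ℕ → S → Prop
  | 0, i => i ∈ R
  | n + 1, i => ∃ j, 0 < p i j ∧ ReachesIn p R n j

theorem wt_nonneg (hp : ∀ i j, 0 ≤ p i j) (i : S) (l : List S) : 0 ≤ wt p i l := by
  induction l generalizing i with
  | nil => exact zero_le_one
  | cons j l ih => exact mul_nonneg (hp i j) (ih j)

theorem wt_cons_pos_iff (hp : ∀ i j, 0 ≤ p i j) {i j : S} {l : List S} :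
    0 < wt p i (j :: l) ↔ 0 < p i j ∧ 0 < wt p j l :=
  ⟨fun h => ⟨pos_of_mul_pos_left h (wt_nonneg hp j l), pos_of_mul_pos_right h (hp i j)⟩,
    fun h => mul_pos h.1 h.2⟩

theorem exists_reachesIn_iff_exists_path (hp : ∀ i j, 0 ≤ p i j) {R : Finset S} {i : S}
    (hi : i ∉ R) :
    (∃ n, ReachesIn p R n i) ↔ ∃ l : List S, 0 < wt p i l ∧ ∃ h : l ≠ [], l.getLast h ∈ R := by
  constructor
  · rintro ⟨n, hn⟩
    induction n generalizing i with
    | zero => exact absurd hn hi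
    | succ n ih =>
      obtain ⟨j, hij, hj⟩ := hn
      by_cases hjR : j ∈ R
      · exact ⟨[j], wt_cons_pos_iff hp |>.mpr ⟨hij, one_pos⟩, List.cons_ne_nil _ _, hjR⟩
      obtain ⟨l, hl, hne, hlast⟩ := ih hjR hj
      exact ⟨j :: l, wt_cons_pos_iff hp |>.mpr ⟨hij, hl⟩, List.cons_ne_nil _ _,
        by rwa [List.getLast_cons hne]⟩
  · rintro ⟨l, hl, hne, hlast⟩
    induction l generalizing i with
    | nil => exact absurd rfl hne
    | cons j l ih =>
      obtain ⟨hij, hjl⟩ := wt_cons_pos_iff hp |>.mp hl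
      by_cases hjR : j ∈ R
      · exact ⟨1, j, hij, hjR⟩
      have hl_ne : l ≠ [] := by
        rintro rfl
        exact hjR hlast
      rw [List.getLast_cons hl_ne] at hlast
      obtain ⟨n, hn⟩ := ih hjR hjl hl_ne hlast
      exact ⟨n + 1, j, hij, hn⟩

theorem exists_reachesIn_of_iterate_mem {f : S → S} (hpos : ∀ i ∉ R, 0 < p i (f i)) {n : ℕ} :
    ∀ {i : S}, f^[n] i ∈ R → ∃ m, ReachesIn p R m i := by
  induction n with
  | zero => exact fun hi => ⟨0, hi⟩
  | succ n ih =>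
    intro i hn
    by_cases hi : i ∈ R
    · exact ⟨0, hi⟩
    obtain ⟨m, hm⟩ := ih (Function.iterate_succ_apply f n i ▸ hn)
    exact ⟨m + 1, f i, hpos i hi, hm⟩

theorem exists_descent_of_reachesIn (hreach : ∀ i ∉ R, ∃ n, ReachesIn p R n i) :
    ∃ d : S → ℕ, ∀ i ∉ R, ∃ j, 0 < p i j ∧ d j < d i := by
  classical
  have hreach' (i : S) : ∃ n, ReachesIn p R n i := by
    by_cases hi : i ∈ R
    exacts [⟨0, hi⟩, hreach i hi]
  refine ⟨fun i => Nat.find (hreach' i), fun i hi => ?_⟩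
  dsimp only
  have hspec := Nat.find_spec (hreach' i)
  have hne : Nat.find (hreach' i) ≠ 0 := fun h0 => hi (by rw [h0] at hspec; exact hspec)
  obtain ⟨m, hm⟩ := Nat.exists_eq_succ_of_ne_zero hne
  rw [hm] at hspec ⊢
  obtain ⟨j, hij, hj⟩ := hspec
  exact ⟨j, hij, Nat.lt_succ_of_le (Nat.find_min' _ hj)⟩

end Paths

section Forests

variable {S : Type*} [Fintype S] [DecidableEq S] {p : S → S → ℝ} {R : Finset S}

theorem exists_forest_of_descent (d : S → ℕ) (hdesc : ∀ i ∉ R, ∃ j, 0 < p i j ∧ d j < d i) :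
    ∃ f : S → S, IsForest R f ∧ ∀ i ∉ R, 0 < p i (f i) := by
  choose next hnext_pos hnext_lt using hdesc
  let f : S → S := fun i => if hi : i ∈ R then i else next i hi
  have hreach (i : S) : ∃ n, f^[n] i ∈ R := by
    induction hd : d i using Nat.strong_induction_on generalizing i with
    | _ k ih =>
      by_cases hi : i ∈ R
      · exact ⟨0, hi⟩
      obtain ⟨n, hn⟩ := ih _ (hd ▸ hnext_lt i hi) (next i hi) rfl
      exact ⟨n + 1, by simpa [Function.iterate_succ_apply, f, hi] using hn⟩
  exact ⟨f, ⟨fun i hi => dif_pos hi, hreach⟩, fun i hi => by simpa [f, hi] using hnext_pos i hi⟩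

theorem exists_pos_forest_iff_forall_reachesIn :
    (∃ f : S → S, IsForest R f ∧ ∀ i ∉ R, 0 < p i (f i)) ↔
      ∀ i ∉ R, ∃ n, ReachesIn p R n i := by
  constructor
  · rintro ⟨f, hf, hpos⟩ i -
    obtain ⟨n, hn⟩ := hf.2 i
    exact exists_reachesIn_of_iterate_mem hpos hn
  · intro hreach
    obtain ⟨d, hdesc⟩ := exists_descent_of_reachesIn hreach
    exact exists_forest_of_descent d hdesc

end Forests

theorem forest_weight_pos_iff_general {S : Type*} [Fintype S] [DecidableEq S]
    (p : S → S → ℝ) (hs : IsStochastic p) (R : Finset S) :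
    (0 < w p R ↔ ∃ f : S → S, IsForest R f ∧ ∀ i ∉ R, 0 < p i (f i)) ∧
    ((∃ f : S → S, IsForest R f ∧ ∀ i ∉ R, 0 < p i (f i)) ↔
      ∀ i ∉ R, ∃ l : List S, 0 < wt p i l ∧ ∃ h : l ≠ [], l.getLast h ∈ R) := by
  have hp := hs.1
  refine ⟨?_, ?_⟩
  · rw [w_pos_iff hp]
    exact exists_congr fun f => and_congr_right fun _ => forestWt_pos_iff hp
  · rw [exists_pos_forest_iff_forall_reachesIn]
    exact forall₂_congr fun i hi => exists_reachesIn_iff_exists_path hp hi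

/-- Positivity of the forest weight `w(R)` is equivalent to the existence of a positive-weight
spanning forest rooted at `R`, and to the existence of positive-probability paths to `R`. -/
theorem forest_weight_pos_iff {S : Type*} [Fintype S] [DecidableEq S]
    (p : S → S → ℝ) (hs : IsStochastic p) (R : Finset S) (hR : R.Nonempty) :
    (0 < w p R ↔ ∃ f : S → S, IsForest R f ∧ ∀ i ∉ R, 0 < p i (f i)) ∧
    ((∃ f : S → S, IsForest R f ∧ ∀ i ∉ R, 0 < p i (f i)) ↔
      ∀ i ∉ R, ∃ l : List S, 0 < wt p i l ∧ ∃ h : l ≠ [], l.getLast h ∈ R) :=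
  forest_weight_pos_iff_general p hs R
end

section
/- Let P be a stochastic matrix on a finite set S and R a nonempty subset with w(R) > 0. For each r ∈ R and each i ∈ S \ R, the quantity h(i) = w_{ir}(R)/w(R) is harmonic: w(R) · Σ_{j≠i} p_{ij} · w_{ir}(R) = w(R) · Σ_{k≠i} p_{ik} w_{kr}(R), equivalently (Σ_{j≠i} p_{ij}) · w_{ir}(R) = Σ_{k≠i} p_{ik} · w_{kr}(R), where w_{ir}(R) is the total weight of forests with root set R in which the tree containing i is rooted at r. -/
open Finset

/-!
Multiplied out, both sides are sums of `p i j * forestWt p R f` over pairs `(j, f)` with `j ≠ i`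
and `f` a forest with root set `R`: on the left the tree containing `i` is rooted at `r`, on the
right the tree containing `j`. Pairs in which the path from `j` passes through `i` occur on both
sides alike, since then `i` and `j` lie in the same tree. On the remaining pairs, exchanging the
step `i → j` with the forest edge `i → f i` (`swapEdge`) is a weight-preserving involution that
carries the left-hand pairs onto the right-hand ones; the rerouted map is again a forest because
the path from `j` avoids `i`.
-/

open Function

section Iterate

variable {α : Type*} {f g : α → α}

def Reaches (f : α → α) (a b : α) : Prop := ∃ n, f^[n] a = b

theorem Reaches.trans {a b c : α} (hab : Reaches f a b) (hbc : Reaches f b c) :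
    Reaches f a c := by
  obtain ⟨m, rfl⟩ := hab
  obtain ⟨n, rfl⟩ := hbc
  exact ⟨n + m, iterate_add_apply f n m a⟩

theorem Reaches.of_reaches_fixedPt {a b r : α} (hr : f r = r) (hab : Reaches f a b)
    (har : Reaches f a r) : Reaches f b r := by
  obtain ⟨m, rfl⟩ := hab
  obtain ⟨n, rfl⟩ := har
  rcases le_total m n with hmn | hnm
  · exact ⟨n - m, by rw [← iterate_add_apply, Nat.sub_add_cancel hmn]⟩
  · refine ⟨0, ?_⟩
    rw [iterate_zero_apply, ← Nat.sub_add_cancel hnm, iterate_add_apply, iterate_fixed hr]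

theorem iterate_eq_of_forall_iterate_ne {i a : α} (hgf : ∀ x, x ≠ i → g x = f x)
    (ha : ∀ n, f^[n] a ≠ i) (n : ℕ) : g^[n] a = f^[n] a := by
  induction n with
  | zero => rfl
  | succ n ih => rw [iterate_succ_apply', iterate_succ_apply', ih, hgf _ (ha n)]

end Iterate

section Update

variable {α : Type*} [DecidableEq α] {f : α → α} {i j r : α}

theorem iterate_update_of_forall_iterate_ne {a : α} (ha : ∀ n, f^[n] a ≠ i) (n : ℕ) :
    (update f i j)^[n] a = f^[n] a :=
  iterate_eq_of_forall_iterate_ne (fun _ hx => update_of_ne hx _ _) ha n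

theorem Reaches.update_apply (h : Reaches f i r) (hir : i ≠ r) (hfi : ∀ n, f^[n] (f i) ≠ i) :
    Reaches (update f i j) (f i) r := by
  obtain ⟨_ | n, hn⟩ := h
  · exact absurd hn hir
  · exact ⟨n, by rwa [iterate_update_of_forall_iterate_ne hfi, ← iterate_succ_apply]⟩

theorem Reaches.update_self (h : Reaches f j r) (hj : ¬ Reaches f j i) :
    Reaches (update f i j) i r := by
  obtain ⟨n, hn⟩ := h
  refine ⟨n + 1, ?_⟩
  rwa [iterate_succ_apply, Function.update_self,
    iterate_update_of_forall_iterate_ne (not_exists.mp hj)]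

def swapEdge (i : α) (x : α × (α → α)) : α × (α → α) := (x.2 i, update x.2 i x.1)

theorem swapEdge_swapEdge (x : α × (α → α)) : swapEdge i (swapEdge i x) = x := by
  simp [swapEdge]

end Update

section Forest

variable {S : Type*} [Fintype S] [DecidableEq S] {R : Finset S} {f : S → S} {i j r : S}

theorem IsForest.iterate_succ_ne (hf : IsForest R f) {x : S} (hx : x ∉ R) (n : ℕ) :
    f^[n + 1] x ≠ x := by
  intro hcyc
  obtain ⟨m, hm⟩ := hf.2 x
  have hper : f^[m * (n + 1)] x = x := (IsPeriodicPt.const_mul hcyc m).eq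
  have hle : m ≤ m * (n + 1) := Nat.le_mul_of_pos_right m n.succ_pos
  rw [← Nat.sub_add_cancel hle, iterate_add_apply, iterate_fixed (hf.1 _ hm)] at hper
  exact hx (hper ▸ hm)

theorem IsForest.iterate_apply_ne (hf : IsForest R f) (hi : i ∉ R) (n : ℕ) :
    f^[n] (f i) ≠ i :=
  (iterate_succ_apply f n i).symm.trans_ne (hf.iterate_succ_ne hi n)

theorem IsForest.update (hf : IsForest R f) (hi : i ∉ R) (hj : ¬ Reaches f j i) :
    IsForest R (Function.update f i j) := by
  set g := Function.update f i j
  have hgf : ∀ x, x ≠ i → g x = f x := fun _ hx => update_of_ne hx _ _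
  refine ⟨fun x hx => by rw [hgf x (ne_of_mem_of_not_mem hx hi), hf.1 x hx], fun x => ?_⟩
  by_cases hx : Reaches g x i
  · obtain ⟨n, hn⟩ := hx
    obtain ⟨m, hm⟩ := hf.2 j
    refine ⟨m + 1 + n, ?_⟩
    have hgi : g i = j := Function.update_self ..
    rwa [iterate_add_apply, hn, iterate_succ_apply, hgi,
      iterate_eq_of_forall_iterate_ne hgf (not_exists.mp hj)]
  · obtain ⟨m, hm⟩ := hf.2 x
    refine ⟨m, ?_⟩
    rwa [← iterate_eq_of_forall_iterate_ne (fun y hy => (hgf y hy).symm) (not_exists.mp hx)]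

theorem IsForest.not_reaches_update_apply (hf : IsForest R f) (hi : i ∉ R) :
    ¬ Reaches (Function.update f i j) (f i) i := by
  rintro ⟨n, hn⟩
  rw [iterate_update_of_forall_iterate_ne (hf.iterate_apply_ne hi)] at hn
  exact hf.iterate_apply_ne hi n hn

theorem forestWt_update (p : S → S → ℝ) (hi : i ∉ R) (f : S → S) (j : S) :
    p i (f i) * forestWt p R (Function.update f i j) = p i j * forestWt p R f := by
  have hiRc : i ∈ Rᶜ := mem_compl.2 hi
  rw [forestWt, forestWt, ← mul_prod_erase _ _ hiRc, ← mul_prod_erase _ _ hiRc,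
    Function.update_self, prod_congr rfl fun x hx => by rw [update_of_ne (ne_of_mem_erase hx)]]
  ring

open Classical in
noncomputable def rootedPairs (R s : Finset S) (a : S × (S → S) → S) (r : S) : Finset (S × (S → S)) :=
  (s ×ˢ univ).filter fun x => IsForest R x.2 ∧ Reaches x.2 (a x) r

theorem mem_rootedPairs {s : Finset S} {a : S × (S → S) → S} {x : S × (S → S)} :
    x ∈ rootedPairs R s a r ↔ x.1 ∈ s ∧ IsForest R x.2 ∧ Reaches x.2 (a x) r := by
  simp [rootedPairs]

theorem sum_mul_wroot (p : S → S → ℝ) (s : Finset S) (c : S → ℝ) (a : S → S) (r : S) :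
    ∑ k ∈ s, c k * wroot p R (a k) r =
      ∑ x ∈ rootedPairs R s (fun x => a x.1) r, c x.1 * forestWt p R x.2 := by
  classical
  rw [rootedPairs, sum_filter, sum_product]
  refine sum_congr rfl fun k _ => ?_
  rw [wroot, mul_sum]
  refine sum_congr rfl fun f _ => ?_
  rw [mul_ite, mul_zero]
  rfl

open Classical in
theorem rootedPairs_filter_reaches_eq (hr : r ∈ R) (s : Finset S) :
    (rootedPairs R s (fun _ => i) r).filter (fun x => Reaches x.2 x.1 i) =
      (rootedPairs R s (fun x => x.1) r).filter (fun x => Reaches x.2 x.1 i) := by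
  ext ⟨k, f⟩
  simp only [mem_filter, mem_rootedPairs]
  constructor
  · rintro ⟨⟨hk, hf, hir⟩, hki⟩
    exact ⟨⟨hk, hf, hki.trans hir⟩, hki⟩
  · rintro ⟨⟨hk, hf, hkr⟩, hki⟩
    exact ⟨⟨hk, hf, hki.of_reaches_fixedPt (hf.1 r hr) hkr⟩, hki⟩

open Classical in
theorem sum_rootedPairs_filter_not_reaches_eq (p : S → S → ℝ) (hi : i ∉ R) (hr : r ∈ R) :
    ∑ x ∈ (rootedPairs R {i}ᶜ (fun _ => i) r).filter (fun x => ¬ Reaches x.2 x.1 i),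
        p i x.1 * forestWt p R x.2 =
      ∑ x ∈ (rootedPairs R {i}ᶜ (fun x => x.1) r).filter (fun x => ¬ Reaches x.2 x.1 i),
        p i x.1 * forestWt p R x.2 := by
  have hir : i ≠ r := (ne_of_mem_of_not_mem hr hi).symm
  refine sum_nbij' (swapEdge i) (swapEdge i) ?_ ?_ (fun x _ => swapEdge_swapEdge x)
    (fun x _ => swapEdge_swapEdge x) ?_
  · rintro ⟨j, f⟩ hx
    simp only [mem_filter, mem_rootedPairs, mem_compl, mem_singleton] at hx ⊢
    obtain ⟨⟨-, hf, hir'⟩, hji⟩ := hx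
    exact ⟨⟨hf.iterate_apply_ne hi 0, hf.update hi hji,
      hir'.update_apply hir (hf.iterate_apply_ne hi)⟩, hf.not_reaches_update_apply hi⟩
  · rintro ⟨k, g⟩ hx
    simp only [mem_filter, mem_rootedPairs, mem_compl, mem_singleton] at hx ⊢
    obtain ⟨⟨-, hg, hkr⟩, hki⟩ := hx
    exact ⟨⟨hg.iterate_apply_ne hi 0, hg.update hi hki, hkr.update_self hki⟩,
      hg.not_reaches_update_apply hi⟩
  · rintro ⟨j, f⟩ -
    exact (forestWt_update p hi f j).symm

end Forest

theorem wroot_harmonic_general {S : Type*} [Fintype S] [DecidableEq S]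
    (p : S → S → ℝ) (R : Finset S) (r : S) (hr : r ∈ R) (i : S) (hi : i ∉ R) :
    (∑ j ∈ ({i}ᶜ : Finset S), p i j) * wroot p R i r
      = ∑ k ∈ ({i}ᶜ : Finset S), p i k * wroot p R k r := by
  classical
  rw [sum_mul, sum_mul_wroot p _ _ (fun _ => i), sum_mul_wroot p _ _ (fun k => k),
    ← sum_filter_add_sum_filter_not _ (fun x => Reaches x.2 x.1 i),
    ← sum_filter_add_sum_filter_not (rootedPairs R _ (fun x => x.1) r)
      (fun x => Reaches x.2 x.1 i),
    rootedPairs_filter_reaches_eq hr, sum_rootedPairs_filter_not_reaches_eq p hi hr]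

/-- The function `i ↦ w_{ir}(R)/w(R)` is harmonic off `R`:
`(∑_{j≠i} p_{ij}) w_{ir}(R) = ∑_{k≠i} p_{ik} w_{kr}(R)`. -/
theorem wroot_harmonic {S : Type*} [Fintype S] [DecidableEq S]
    (p : S → S → ℝ) (hs : IsStochastic p) (R : Finset S) (hR : R.Nonempty)
    (hw : 0 < w p R) (r : S) (hr : r ∈ R) (i : S) (hi : i ∉ R) :
    (∑ j ∈ ({i}ᶜ : Finset S), p i j) * wroot p R i r
      = ∑ k ∈ ({i}ᶜ : Finset S), p i k * wroot p R k r :=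
  wroot_harmonic_general p R r hr i hi
end

section
/- Tree algebra identity: for a stochastic matrix P on finite S, a subset R, and j ∈ S \ R, one has w(R ∪ {j}) = w(R) + Σ_{k ∈ S \ R} p_{jk} · w_{kj}(R ∪ {j}), where w and w_{kj} denote forest weights as defined by root sets. -/
/-!
Multiply `w(R ∪ {j})` by `1 = ∑ₖ p_{jk}` and split each term `p_{jk} · (forest f)` according to
whether the tree of `k` in `f` has root `j`. If it does, these terms sum to `p_{jk} w_{kj}(R ∪ {j})`,
which vanishes for `k ∈ R`. If it does not, redirecting the root `j` to `k` turns `f` into a forest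
with root set `R` of weight `p_{jk}` times that of `f`, and every such forest arises exactly once
(cut the edge leaving `j`), so these terms sum to `w(R)`.
-/

open Finset

open Classical in
noncomputable def wavoid {S : Type*} [Fintype S] [DecidableEq S]
    (p : S → S → ℝ) (A : Finset S) (i j : S) : ℝ :=
  ∑ f : S → S, if IsForest A f ∧ ¬∃ n : ℕ, f^[n] i = j then forestWt p A f else 0

section Iterate

variable {S : Type*} [DecidableEq S]

lemma exists_iterate_update_mem_insert {g : S → S} {j k i : S} {s : Set S} {n : ℕ}
    (h : g^[n] i ∈ s) : ∃ m, (Function.update g j k)^[m] i ∈ insert j s := by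
  induction n generalizing i with
  | zero => exact ⟨0, Set.mem_insert_of_mem j h⟩
  | succ n ih =>
    by_cases hij : i = j
    · exact ⟨0, hij ▸ Set.mem_insert i s⟩
    · obtain ⟨m, hm⟩ := ih (i := g i) (by rwa [Function.iterate_succ_apply] at h)
      exact ⟨m + 1, by rwa [Function.iterate_succ_apply, Function.update_of_ne hij]⟩

lemma iterate_update_of_forall_iterate_ne_s5 {f : S → S} {j k i : S} (h : ∀ n, f^[n] i ≠ j)
    (n : ℕ) : (Function.update f j k)^[n] i = f^[n] i := by
  induction n with
  | zero => rfl
  | succ n ih =>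
    rw [Function.iterate_succ_apply', Function.iterate_succ_apply', ih,
      Function.update_of_ne (h n)]

end Iterate

namespace IsForest

variable {S : Type*} [Fintype S] [DecidableEq S] {R : Finset S}

lemma iterate_eq_self {f : S → S} (hf : IsForest R f) {i : S} (hi : i ∈ R) (n : ℕ) :
    f^[n] i = i :=
  Function.iterate_fixed (hf.1 i hi) n

lemma mem_of_isPeriodicPt {g : S → S} (hg : IsForest R g) {c : ℕ} (hc : 0 < c) {j : S}
    (hper : Function.IsPeriodicPt g c j) : j ∈ R := by
  obtain ⟨N, hN⟩ := hg.2 j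
  have hstable : g^[c * N] j = g^[N] j := by
    rw [← Nat.sub_add_cancel (Nat.le_mul_of_pos_left N hc),
      Function.iterate_add_apply, hg.iterate_eq_self hN]
  rwa [← hstable, (hper.mul_const N).eq] at hN

lemma update_of_forall_iterate_ne {j : S} (hj : j ∉ R) {f : S → S}
    (hf : IsForest (insert j R) f) {k : S} (hk : ∀ n, f^[n] k ≠ j) :
    IsForest R (Function.update f j k) := by
  set g := Function.update f j k with hg
  have hgj : g j = k := Function.update_self j k f
  have hk_reach : ∃ n, g^[n] k ∈ R := by
    obtain ⟨n, hn⟩ := hf.2 k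
    refine ⟨n, ?_⟩
    rw [iterate_update_of_forall_iterate_ne_s5 hk]
    exact (mem_insert.mp hn).resolve_left (hk n)
  refine ⟨fun i hi => ?_, fun i => ?_⟩
  · rw [hg, Function.update_of_ne (ne_of_mem_of_not_mem hi hj), hf.1 i (mem_insert_of_mem hi)]
  · obtain ⟨n, hn⟩ := hf.2 i
    obtain ⟨m, hm⟩ := exists_iterate_update_mem_insert (j := j) (k := k) (s := ↑(insert j R)) hn
    rcases mem_insert.mp (by simpa using hm) with hmj | hmR
    · obtain ⟨l, hl⟩ := hk_reach
      refine ⟨l + 1 + m, ?_⟩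
      rwa [Function.iterate_add_apply, hmj, Function.iterate_succ_apply, hgj]
    · exact ⟨m, hmR⟩

lemma update_self {j : S} (hj : j ∉ R) {g : S → S} (hg : IsForest R g) :
    IsForest (insert j R) (Function.update g j j) ∧
      ∀ n, (Function.update g j j)^[n] (g j) ≠ j := by
  refine ⟨⟨fun i hi => ?_, fun i => ?_⟩, fun n hn => ?_⟩
  · rcases mem_insert.mp hi with rfl | hiR
    · exact Function.update_self i i g
    · rw [Function.update_of_ne (ne_of_mem_of_not_mem hiR hj), hg.1 i hiR]
  · obtain ⟨n, hn⟩ := hg.2 i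
    simpa using exists_iterate_update_mem_insert (j := j) (k := j) (s := ↑R) hn
  · -- re-attaching `j` below `g j` recovers `g`, so `j` would lie on a cycle of `g`
    obtain ⟨m, hm⟩ := exists_iterate_update_mem_insert (j := j) (k := g j) (s := {j})
      (show (Function.update g j j)^[n] (g j) ∈ ({j} : Set S) from hn)
    simp only [Function.update_idem, Function.update_eq_self, Set.insert_eq_of_mem,
      Set.mem_singleton_iff] at hm
    refine hj (hg.mem_of_isPeriodicPt m.succ_pos ?_)
    rwa [Function.IsPeriodicPt, Function.IsFixedPt, Function.iterate_succ_apply]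

end IsForest

section Weights

variable {S : Type*} [Fintype S] [DecidableEq S] (p : S → S → ℝ)

lemma forestWt_update_of_not_mem {R : Finset S} {j : S} (hj : j ∉ R) (f : S → S) (k : S) :
    forestWt p R (Function.update f j k) = p j k * forestWt p (insert j R) f := by
  rw [forestWt, forestWt, ← mul_prod_erase _ _ (mem_compl.mpr hj), compl_insert,
    Function.update_self]
  congr 1
  exact prod_congr rfl fun i hi => by rw [Function.update_of_ne (ne_of_mem_erase hi)]

lemma w_eq_wroot_add_wavoid (A : Finset S) (i j : S) :
    w p A = wroot p A i j + wavoid p A i j := by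
  rw [w, wroot, wavoid, ← sum_add_distrib]
  refine sum_congr rfl fun f _ => ?_
  by_cases hf : IsForest A f <;> by_cases hij : ∃ n, f^[n] i = j <;> simp [hf, hij]

lemma wroot_eq_zero_of_mem {A : Finset S} {i j : S} (hi : i ∈ A) (hij : i ≠ j) :
    wroot p A i j = 0 := by
  refine sum_eq_zero fun f _ => if_neg ?_
  rintro ⟨hf, n, hn⟩
  exact hij (hf.iterate_eq_self hi n ▸ hn)

open Classical in
lemma w_eq_sum_mul_wavoid {R : Finset S} {j : S} (hj : j ∉ R) :
    w p R = ∑ k, p j k * wavoid p (insert j R) k j := by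
  have hpairs : ∑ k, p j k * wavoid p (insert j R) k j
      = ∑ x ∈ (univ ×ˢ univ).filter
          (fun x : S × (S → S) => IsForest (insert j R) x.2 ∧ ¬∃ n, x.2^[n] x.1 = j),
        p j x.1 * forestWt p (insert j R) x.2 := by
    simp only [wavoid, mul_sum, mul_ite, mul_zero]
    rw [sum_filter, sum_product]
  rw [hpairs, w, ← sum_filter]
  symm
  refine sum_nbij' (fun x => Function.update x.2 j x.1) (fun g => (g j, Function.update g j j))
    ?_ ?_ ?_ ?_ ?_
  · rintro ⟨k, f⟩ hx
    obtain ⟨hf, hk⟩ := (mem_filter.mp hx).2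
    exact mem_filter.mpr ⟨mem_univ _,
      hf.update_of_forall_iterate_ne hj fun n hn => hk ⟨n, hn⟩⟩
  · intro g hg
    obtain ⟨hf, hk⟩ := (mem_filter.mp hg).2.update_self hj
    exact mem_filter.mpr ⟨mem_product.mpr ⟨mem_univ _, mem_univ _⟩, hf,
      fun ⟨n, hn⟩ => hk n hn⟩
  · rintro ⟨k, f⟩ hx
    have hfj : f j = j := (mem_filter.mp hx).2.1.1 j (mem_insert_self j R)
    simp [Function.update_idem, hfj]
  · intro g _
    simp [Function.update_idem]
  · rintro ⟨k, f⟩ _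
    exact (forestWt_update_of_not_mem p hj f k).symm

end Weights

/-- Tree algebra identity: `w(R ∪ {j}) = w(R) + ∑_{k ∈ S∖R} p_{jk} w_{kj}(R ∪ {j})`. -/
theorem tree_algebra_identity {S : Type*} [Fintype S] [DecidableEq S]
    (p : S → S → ℝ) (hs : IsStochastic p) (R : Finset S) (j : S) (hj : j ∉ R) :
    w p (insert j R) = w p R + ∑ k ∈ Rᶜ, p j k * wroot p (insert j R) k j := by
  have hroot_of_mem : ∀ k ∈ univ, k ∉ Rᶜ → p j k * wroot p (insert j R) k j = 0 :=
    fun k _ hk => by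
      have hkR : k ∈ R := by simpa using hk
      rw [wroot_eq_zero_of_mem p (mem_insert_of_mem hkR) (ne_of_mem_of_not_mem hkR hj),
        mul_zero]
  calc w p (insert j R) = ∑ k, p j k * w p (insert j R) := by
        rw [← sum_mul, hs.2 j, one_mul]
    _ = ∑ k, p j k * wroot p (insert j R) k j + ∑ k, p j k * wavoid p (insert j R) k j := by
        rw [← sum_add_distrib]
        exact sum_congr rfl fun k _ => by rw [w_eq_wroot_add_wavoid p _ k j, mul_add]
    _ = w p R + ∑ k ∈ Rᶜ, p j k * wroot p (insert j R) k j := by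
        rw [← w_eq_sum_mul_wavoid p hj, sum_subset (subset_univ _) hroot_of_mem, add_comm]
end

section
/- Cayley's formula for rooted forests: for 1 ≤ k ≤ n, the number of forests labeled by {1,…,n} with root set {1,…,k} equals k · n^{n−k−1}. -/
open Finset

/-- `cayley n k`: the number of forests labeled by `{1,…,n}` with root set `{1,…,k}`. -/
noncomputable def cayley (n k : ℕ) : ℕ :=
  Nat.card {f : Fin n → Fin n // IsForest (Finset.univ.filter fun i : Fin n => (i : ℕ) < k) f}

/-!
Deleting the roots of a forest with root set `R` leaves a forest on `Rᶜ` whose roots `J` are the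
vertices attached directly to `R`; conversely, such a forest and any map `J → R` glue back to a
unique forest with root set `R`. Hence `F(S, R) = ∑_{J ⊆ Rᶜ} |R|^|J| F(Rᶜ, J)`, and by strong
induction on `|S|` the claim reduces to `∑_j C(m, j) j k^j m^(m-j) = m k (k + m)^(m-1)`, the
derivative of the binomial theorem.
-/

open Function

theorem sum_range_choose_mul_mul_pow_mul_pow {R : Type*} [CommSemiring R] (a b : R) (m : ℕ) :
    ∑ j ∈ range (m + 1), (m.choose j * j : R) * a ^ j * b ^ (m - j) =
      m * a * (a + b) ^ (m - 1) := by
  cases m with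
  | zero => simp
  | succ m =>
    rw [sum_range_succ', add_pow]
    simp only [Nat.cast_zero, mul_zero, zero_mul, add_zero, add_tsub_cancel_right, mul_sum]
    refine sum_congr rfl fun j _ => ?_
    rw [← Nat.cast_mul, ← Nat.add_one_mul_choose_eq, Nat.add_sub_add_right, pow_succ]
    push_cast
    ring

theorem sum_finset_pow_card_mul_card_mul_pow (T : Type*) [Fintype T] (k : ℕ) :
    ∑ J : Finset T, k ^ #J * (#J * Fintype.card T ^ (Fintype.card T - #J)) =
      Fintype.card T * (k * (k + Fintype.card T) ^ (Fintype.card T - 1)) := by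
  have h := sum_range_choose_mul_mul_pow_mul_pow k (Fintype.card T) (Fintype.card T)
  simp only [Nat.cast_id] at h
  rw [← powerset_univ, sum_powerset_apply_card (fun j => k ^ j * (j * _ ^ (_ - j))), card_univ,
    ← mul_assoc, ← h]
  refine sum_congr rfl fun j _ => ?_
  rw [smul_eq_mul]
  ring

section Decomposition

variable {S : Type*} [Fintype S] [DecidableEq S] {R : Finset S}

def firstLevel (R : Finset S) (f : S → S) : Finset ↥Rᶜ := {x | f x ∈ R}

def dropRoots (R : Finset S) (f : S → S) (x : ↥Rᶜ) : ↥Rᶜ :=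
  if h : f x ∈ R then x else ⟨f x, mem_compl.2 h⟩

def regraft (R : Finset S) (J : Finset ↥Rᶜ) (a : J → R) (h : ↥Rᶜ → ↥Rᶜ) (y : S) : S :=
  if hy : y ∈ Rᶜ then
    if hx : ⟨y, hy⟩ ∈ J then a ⟨_, hx⟩ else h ⟨y, hy⟩
  else y

theorem mem_firstLevel {f : S → S} {x : ↥Rᶜ} : x ∈ firstLevel R f ↔ f x ∈ R := by
  simp [firstLevel]

theorem isForest_dropRoots {f : S → S} (hf : IsForest R f) :
    IsForest (firstLevel R f) (dropRoots R f) := by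
  refine ⟨fun x hx => dif_pos (mem_firstLevel.1 hx), fun x => ?_⟩
  obtain ⟨n, hn⟩ := hf.2 x
  induction n generalizing x with
  | zero => exact absurd hn (mem_compl.1 x.2)
  | succ n ih =>
    by_cases hfx : f x ∈ R
    · exact ⟨0, mem_firstLevel.2 hfx⟩
    · obtain ⟨t, ht⟩ := ih ⟨f x, mem_compl.2 hfx⟩ hn
      refine ⟨t + 1, ?_⟩
      rwa [iterate_succ_apply, dropRoots, dif_neg hfx]

theorem regraft_of_mem {J : Finset ↥Rᶜ} (a : J → R) (h : ↥Rᶜ → ↥Rᶜ) {x : ↥Rᶜ} (hx : x ∈ J) :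
    regraft R J a h x = a ⟨x, hx⟩ := by
  simp [regraft, hx]

theorem regraft_of_notMem {J : Finset ↥Rᶜ} (a : J → R) (h : ↥Rᶜ → ↥Rᶜ) {x : ↥Rᶜ} (hx : x ∉ J) :
    regraft R J a h x = h x := by
  simp [regraft, hx]

theorem isForest_regraft {J : Finset ↥Rᶜ} (a : J → R) {h : ↥Rᶜ → ↥Rᶜ} (hh : IsForest J h) :
    IsForest R (regraft R J a h) := by
  refine ⟨fun y hy => dif_neg (notMem_compl.2 hy), fun y => ?_⟩
  by_cases hy : y ∈ R
  · exact ⟨0, hy⟩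
  obtain ⟨x, rfl⟩ : ∃ x : ↥Rᶜ, x.1 = y := ⟨⟨y, mem_compl.2 hy⟩, rfl⟩
  have hJ : ∀ x (hx : x ∈ J), regraft R J a h x ∈ R := fun x hx => by
    rw [regraft_of_mem a h hx]
    exact (a ⟨x, hx⟩).2
  obtain ⟨n, hn⟩ := hh.2 x
  induction n generalizing x with
  | zero => exact ⟨1, hJ x hn⟩
  | succ n ih =>
    by_cases hx : x ∈ J
    · exact ⟨1, hJ x hx⟩
    · obtain ⟨t, ht⟩ := ih (h x) (mem_compl.1 (h x).2) hn
      exact ⟨t + 1, by rwa [iterate_succ_apply, regraft_of_notMem a h hx]⟩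

theorem firstLevel_regraft {J : Finset ↥Rᶜ} (a : J → R) (h : ↥Rᶜ → ↥Rᶜ) :
    firstLevel R (regraft R J a h) = J := by
  ext x
  by_cases hx : x ∈ J
  · simp [mem_firstLevel, regraft, hx]
  · simp [mem_firstLevel, regraft, hx, (mem_compl.1 (h x).2)]

theorem dropRoots_regraft {J : Finset ↥Rᶜ} (a : J → R) {h : ↥Rᶜ → ↥Rᶜ}
    (hh : ∀ x ∈ J, h x = x) : dropRoots R (regraft R J a h) = h := by
  ext x
  by_cases hx : x ∈ J
  · simp [dropRoots, regraft, hx, hh x hx]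
  · simp [dropRoots, regraft, hx, (mem_compl.1 (h x).2)]

theorem regraft_dropRoots {f : S → S} (hf : ∀ i ∈ R, f i = i) :
    regraft R (firstLevel R f) (fun x => ⟨f x, mem_firstLevel.1 x.2⟩) (dropRoots R f) = f := by
  ext y
  by_cases hy : y ∈ R
  · simp [regraft, hy, hf y hy]
  · by_cases hfy : f y ∈ R
    · simp [regraft, hy, hfy, mem_firstLevel]
    · simp [regraft, dropRoots, hy, hfy, mem_firstLevel]

def firstLevelFiberEquiv (R : Finset S) (J : Finset ↥Rᶜ) :
    {f : {f : S → S // IsForest R f} // firstLevel R f.1 = J} ≃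
      (J → R) × {h : ↥Rᶜ → ↥Rᶜ // IsForest J h} where
  toFun | ⟨⟨f, hf⟩, hJ⟩ => (fun x => ⟨f x, mem_firstLevel.1 (hJ ▸ x.2)⟩,
    ⟨dropRoots R f, hJ ▸ isForest_dropRoots hf⟩)
  invFun p := ⟨⟨regraft R J p.1 p.2.1, isForest_regraft p.1 p.2.2⟩, firstLevel_regraft p.1 p.2.1⟩
  left_inv := by
    rintro ⟨⟨f, hf⟩, rfl⟩
    exact Subtype.ext (Subtype.ext (regraft_dropRoots hf.1))
  right_inv := by
    rintro ⟨a, h, hh⟩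
    refine Prod.ext ?_ (Subtype.ext (dropRoots_regraft a hh.1))
    ext x
    simp [regraft_of_mem a h x.2]

theorem card_forests_eq_sum (R : Finset S) :
    Nat.card {f : S → S // IsForest R f} =
      ∑ J : Finset ↥Rᶜ, #R ^ #J * Nat.card {h : ↥Rᶜ → ↥Rᶜ // IsForest J h} := by
  rw [← Nat.card_congr (Equiv.sigmaFiberEquiv fun f : {f // IsForest R f} => firstLevel R f.1),
    Nat.card_sigma]
  refine sum_congr rfl fun J _ => ?_
  rw [Nat.card_congr (firstLevelFiberEquiv R J), Nat.card_prod, Nat.card_fun]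
  simp

end Decomposition

section Counting

variable {S : Type*} [Fintype S] [DecidableEq S]

theorem IsForest.nonempty_roots [Nonempty S] {R : Finset S} {f : S → S} (hf : IsForest R f) :
    R.Nonempty :=
  let ⟨_, hn⟩ := hf.2 (Classical.arbitrary S)
  ⟨_, hn⟩

theorem isForest_univ_iff {f : S → S} : IsForest univ f ↔ f = id :=
  ⟨fun hf => funext fun i => hf.1 i (mem_univ i),
    fun hf => hf ▸ ⟨fun _ _ => rfl, fun i => ⟨0, mem_univ i⟩⟩⟩

theorem card_forests_mul_card (R : Finset S) :
    Nat.card {f : S → S // IsForest R f} * Fintype.card S =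
      #R * Fintype.card S ^ (Fintype.card S - #R) := by
  induction hn : Fintype.card S using Nat.strong_induction_on generalizing S with
  | _ n ih =>
  obtain rfl | hR := R.eq_empty_or_nonempty
  · cases isEmpty_or_nonempty S
    · simp [← hn]
    · have : IsEmpty {f : S → S // IsForest ∅ f} :=
        ⟨fun f => not_nonempty_empty f.2.nonempty_roots⟩
      simp
  set m := Fintype.card ↥Rᶜ with hm
  have hkm : #R + m = n := by
    rw [hm, Fintype.card_coe, card_compl, hn, Nat.add_sub_of_le (hn ▸ card_le_univ R)]
  rw [← hkm, add_tsub_cancel_left]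
  obtain hm0 | hmpos := m.eq_zero_or_pos
  · obtain rfl : R = univ :=
      (compl_eq_empty_iff R).1 (card_eq_zero.1 (by rwa [← Fintype.card_coe]))
    simp [isForest_univ_iff, hm0]
  have hk : 0 < #R := card_pos.2 hR
  have key : Nat.card {f : S → S // IsForest R f} * m = m * (#R * (#R + m) ^ (m - 1)) :=
    calc _ = ∑ J : Finset ↥Rᶜ, #R ^ #J * (#J * m ^ (m - #J)) := by
          rw [card_forests_eq_sum, sum_mul]
          refine sum_congr rfl fun J _ => ?_
          rw [mul_assoc, ih m (by omega) J rfl]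
      _ = _ := sum_finset_pow_card_mul_card_mul_pow _ _
  rw [Nat.eq_of_mul_eq_mul_left hmpos ((mul_comm _ _).trans key), mul_assoc, ← pow_succ,
    Nat.sub_add_cancel hmpos]

end Counting

theorem cayley_formula_general (n k : ℕ) (h2 : k ≤ n) :
    cayley n k * n = k * n ^ (n - k) := by
  have hroots : #(univ.filter fun i : Fin n => (i : ℕ) < k) = k := by
    rw [Fin.card_filter_val_lt, min_eq_right h2]
  have := card_forests_mul_card (univ.filter fun i : Fin n => (i : ℕ) < k)
  rwa [hroots, Fintype.card_fin] at this

/-- Cayley's formula: the number of forests labeled by `[n]` with root set `[k]` is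
`k · n^{n-k-1}` (stated multiplied through by `n` to stay in `ℕ`). -/
theorem cayley_formula (n k : ℕ) (h1 : 1 ≤ k) (h2 : k ≤ n) :
    cayley n k * n = k * n ^ (n - k) :=
  cayley_formula_general n k h2
end

section
/- Matrix forest theorem (determinant form): let P be a stochastic matrix on finite S, L = I − P, and R a nonempty subset of S. Then det L(R) = Σ_{ROOTS(f)=R} Π_{(i,j)∈f} p_{ij}, where L(R) is L with all rows and columns indexed by R removed, and the sum ranges over spanning forests of S with root set exactly R. -/
open Finset

/-! Since the rows of `P` sum to `1`, row `i` of `L(R)` is `∑ k, p i k • (e i - e k)`, where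
`e k = 0` for `k ∈ R`. Multilinearity of the determinant in the rows expands `det L(R)` over all
successor maps `r : Rᶜ → S` as `∑ r, (∏ i, p i (r i)) * det (1 - N r)`, with `N r` the 0/1
transition matrix of `r` on `Rᶜ`. If every orbit of `r` reaches `R`, then `N r` is nilpotent and
the determinant is `1`. Otherwise the indicator of the states whose orbit avoids `R` is invariant
under `r`, hence a nonzero vector in the kernel of `1 - N r`. -/

open Function

namespace Matrix

variable {n R : Type*} [Fintype n] [DecidableEq n] [CommRing R]

theorem det_one_sub_of_isNilpotent [IsDomain R] {N : Matrix n n R} (hN : IsNilpotent N) :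
    (1 - N).det = 1 := by
  obtain ⟨r, -, hr⟩ := Polynomial.isUnit_iff.mp (isUnit_charpolyRev_of_isNilpotent hN)
  have h0 : N.charpolyRev.eval 0 = 1 := eval_charpolyRev
  have h1 : N.charpolyRev.eval 1 = (1 - N).det := by
    rw [charpolyRev, ← Polynomial.coe_evalRingHom, RingHom.map_det]
    congr 1
    ext i j
    by_cases hij : i = j <;> simp [hij]
  rw [← h1, ← hr, Polynomial.eval_C]
  rwa [← hr, Polynomial.eval_C] at h0

theorem det_of_sum_smul_rows {κ : Type*} [Fintype κ] (c : n → κ → R) (v : n → κ → n → R) :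
    (of fun i => ∑ k, c i k • v i k).det
      = ∑ r : n → κ, (∏ i, c i (r i)) * (of fun i => v i (r i)).det :=
  (detRowAlternating.toMultilinearMap.map_sum fun i k => c i k • v i k).trans <|
    sum_congr rfl fun _ _ => detRowAlternating.toMultilinearMap.map_smul_univ _ _

abbrev deleteRowsCols {S α : Type*} (M : Matrix S S α) (R : Finset S) :
    Matrix {x // x ∉ R} {x // x ∉ R} α :=
  M.submatrix Subtype.val Subtype.val

end Matrix

open Matrix

def funMatrix (K : Type*) [Zero K] [One K] {S : Type*} [DecidableEq S] (f : S → S) :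
    Matrix S S K :=
  of fun i j => if f i = j then 1 else 0

theorem Function.iterate_mem_of_le {S : Type*} {R : Set S} {f : S → S} (hf : ∀ i ∈ R, f i = i)
    {i : S} {m n : ℕ} (hmn : m ≤ n) (hm : f^[m] i ∈ R) : f^[n] i ∈ R := by
  obtain ⟨k, rfl⟩ := Nat.exists_eq_add_of_le hmn
  rwa [add_comm, iterate_add_apply, iterate_fixed (hf _ hm)]

section Forest

variable {K S : Type*} [CommRing K] [Fintype S] [DecidableEq S] {R : Finset S} {f : S → S}

theorem funMatrix_deleteRowsCols_mulVec (g : {x // x ∉ R} → K) (i : {x // x ∉ R}) :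
    ((funMatrix K f).deleteRowsCols R *ᵥ g) i
      = if h : f i ∈ R then 0 else g ⟨f i, h⟩ := by
  simp only [mulVec, dotProduct, submatrix_apply, funMatrix, of_apply, ite_mul, one_mul, zero_mul]
  split_ifs with h
  · exact sum_eq_zero fun j _ => if_neg fun hj : f i = j => j.2 (hj ▸ h)
  · rw [Fintype.sum_eq_single ⟨f i, h⟩ fun j hj => if_neg fun hj' => hj (Subtype.ext hj'.symm),
      if_pos rfl]

theorem funMatrix_deleteRowsCols_pow_apply (hf : ∀ i ∈ R, f i = i) (n : ℕ) (i j : {x // x ∉ R}) :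
    ((funMatrix K f).deleteRowsCols R ^ n) i j
      = if f^[n] i = j then 1 else 0 := by
  induction n generalizing i with
  | zero => by_cases h : i = j <;> simp [one_apply, h, Subtype.val_injective.ne]
  | succ n ih =>
    rw [pow_succ', mul_apply, iterate_succ_apply]
    refine (funMatrix_deleteRowsCols_mulVec _ i).trans ?_
    split_ifs with hi hn hn
    · exact (j.2 (by rw [← hn, iterate_fixed (hf _ hi)]; exact hi)).elim
    · rfl
    · exact (ih _).trans (if_pos hn)
    · exact (ih _).trans (if_neg hn)

theorem isNilpotent_funMatrix_deleteRowsCols (hf : ∀ i ∈ R, f i = i) (hF : IsForest R f) :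
    IsNilpotent ((funMatrix K f).deleteRowsCols R) := by
  choose t ht using hF.2
  obtain ⟨n, hn⟩ := Finite.exists_le t
  refine ⟨n, Matrix.ext fun i j => ?_⟩
  rw [funMatrix_deleteRowsCols_pow_apply hf, if_neg, Matrix.zero_apply]
  exact fun h => j.2 (h ▸ iterate_mem_of_le hf (hn i) (ht i))

theorem det_one_sub_funMatrix_deleteRowsCols_of_not_isForest [IsDomain K] (hf : ∀ i ∈ R, f i = i)
    (hF : ¬IsForest R f) :
    (1 - (funMatrix K f).deleteRowsCols R).det = 0 := by
  classical
  obtain ⟨i₀, hi₀⟩ : ∃ i, ∀ n, f^[n] i ∉ R := by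
    by_contra! h
    exact hF ⟨hf, h⟩
  have escapes_iff (i : {x // x ∉ R}) :
      (∀ n, f^[n] (f i) ∉ R) ↔ ∀ n, f^[n] i ∉ R := by
    refine ⟨fun h n => ?_, fun h n => iterate_succ_apply f n i ▸ h (n + 1)⟩
    cases n with
    | zero => exact i.2
    | succ n => exact iterate_succ_apply f n i ▸ h n
  rw [← exists_mulVec_eq_zero_iff]
  refine ⟨fun j => if ∀ n, f^[n] j.1 ∉ R then 1 else 0, fun h => ?_, funext fun i => ?_⟩
  · simpa [hi₀] using congrFun h ⟨i₀, hi₀ 0⟩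
  · rw [sub_mulVec, one_mulVec, Pi.sub_apply, funMatrix_deleteRowsCols_mulVec, Pi.zero_apply,
      sub_eq_zero]
    by_cases hi : f i ∈ R
    · rw [dif_pos hi, if_neg fun h => h 1 hi]
    · rw [dif_neg hi, ← escapes_iff]

open Classical in
theorem det_one_sub_funMatrix_deleteRowsCols [IsDomain K] (hf : ∀ i ∈ R, f i = i) :
    (1 - (funMatrix K f).deleteRowsCols R).det
      = if IsForest R f then 1 else 0 := by
  split_ifs with hF
  · exact det_one_sub_of_isNilpotent (isNilpotent_funMatrix_deleteRowsCols hf hF)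
  · exact det_one_sub_funMatrix_deleteRowsCols_of_not_isForest hf hF

end Forest

section Stochastic

variable {K S : Type*} [CommRing K] [Fintype S] [DecidableEq S] (R : Finset S)

omit [Fintype S] [DecidableEq S] in
theorem extend_val_id_apply_of_mem (r : {x // x ∉ R} → S) :
    ∀ i ∈ R, extend Subtype.val r id i = i :=
  fun _ hi => extend_apply' _ _ _ fun ⟨a, ha⟩ => a.2 (ha ▸ hi)

omit [Fintype S] [DecidableEq S] in
theorem extend_val_id_restrict {f : S → S} (hf : ∀ i ∈ R, f i = i) :
    extend Subtype.val (fun i : {x // x ∉ R} => f i) id = f := by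
  funext i
  by_cases hi : i ∈ R
  · rw [extend_val_id_apply_of_mem R _ i hi, hf i hi]
  · exact Subtype.val_injective.extend_apply _ _ ⟨i, hi⟩

theorem one_sub_deleteRowsCols_eq_sum_smul {p : S → S → K} (hp : ∀ i, ∑ j, p i j = 1) :
    (1 - of p).deleteRowsCols R
      = of fun i : {x // x ∉ R} => ∑ k, p i k • fun j : {x // x ∉ R} =>
          (1 : Matrix {x // x ∉ R} {x // x ∉ R} K) i j - if k = j.1 then 1 else 0 := by
  ext i j
  simp [mul_sub, sum_sub_distrib, hp, one_apply, Subtype.ext_iff]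

theorem det_one_sub_deleteRowsCols_eq_sum {p : S → S → K} (hp : ∀ i, ∑ j, p i j = 1) :
    ((1 - of p).deleteRowsCols R).det
      = ∑ r : {x // x ∉ R} → S, (∏ i : {x // x ∉ R}, p i (r i)) *
          (1 - (funMatrix K (extend Subtype.val r id)).deleteRowsCols R).det := by
  rw [one_sub_deleteRowsCols_eq_sum_smul R hp, det_of_sum_smul_rows]
  refine sum_congr rfl fun r _ => ?_
  congr 2
  ext i j
  simp [funMatrix]

theorem forestWt_extend_val_id (p : S → S → ℝ) (r : {x // x ∉ R} → S) :
    forestWt p R (extend Subtype.val r id) = ∏ i : {x // x ∉ R}, p i (r i) := by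
  rw [forestWt, prod_subtype (F := inferInstance) Rᶜ fun _ => mem_compl]
  simp only [Subtype.val_injective.extend_apply]

open Classical in
theorem w_eq_sum_extend_val_id (p : S → S → ℝ) :
    w p R = ∑ r : {x // x ∉ R} → S,
      if IsForest R (extend Subtype.val r id) then ∏ i : {x // x ∉ R}, p i (r i) else 0 := by
  have hinj : Injective fun r : {x // x ∉ R} → S => extend Subtype.val r id :=
    LeftInverse.injective (g := (· ∘ Subtype.val)) fun r => extend_comp Subtype.val_injective r id
  refine (Fintype.sum_of_injective _ hinj _ _
    (fun f hf => if_neg fun hF => hf ⟨_, extend_val_id_restrict R hF.1⟩) fun r => ?_).symm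
  rw [forestWt_extend_val_id]

end Stochastic

theorem matrix_forest_det_general {S : Type*} [Fintype S] [DecidableEq S]
    (p : S → S → ℝ) (hs : IsStochastic p) (R : Finset S) :
    Matrix.det ((1 - Matrix.of p).submatrix
        (fun x : {x : S // x ∉ R} => x.1) (fun x : {x : S // x ∉ R} => x.1))
      = w p R := by
  rw [det_one_sub_deleteRowsCols_eq_sum R hs.2, w_eq_sum_extend_val_id]
  refine sum_congr rfl fun r _ => ?_
  rw [det_one_sub_funMatrix_deleteRowsCols (extend_val_id_apply_of_mem R r), mul_ite, mul_one,
    mul_zero]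

/-- Matrix forest theorem (determinant form): `det L(R) = w(R)` with `L = I - P`. -/
theorem matrix_forest_det {S : Type*} [Fintype S] [DecidableEq S]
    (p : S → S → ℝ) (hs : IsStochastic p) (R : Finset S) (hR : R.Nonempty) :
    Matrix.det ((1 - Matrix.of p).submatrix
        (fun x : {x : S // x ∉ R} => x.1) (fun x : {x : S // x ∉ R} => x.1))
      = w p R :=
  matrix_forest_det_general p hs R
end

section
/- Irreducibility of the Laplacian minor as a polynomial: let L be the n×n matrix with off-diagonal entries L_{ij} = −x_{ij} (i ≠ j) and diagonal entries L_{ii} = Σ_{j≠i} x_{ij}, in the independent indeterminates x_{ij}. Then for each i, the determinant of the principal minor L(i) obtained by deleting row and column i is an irreducible polynomial in the variables (x_{jk}). -/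
/-!
Give the variables `x_{kj}` of row `k` weight one. Row `x` of `L(i)` is homogeneous of degree
`[x = k]` for this weight, so `det L(i)` is homogeneous of degree `1` in the variables of row
`k ≠ i` and of degree `0` in those of row `i`. Weighted degrees add over a domain, so in a
factorisation `det L(i) = g * h` every row occurs in at most one factor, and a factor involving no
row at all is a nonzero constant. Suppose `g` involves row `u` and `h` row `v`. Evaluate at the
points given by a map `s`, where `x_{kj} = 1` if `j = s k` and `0` otherwise: the minor becomes
`1 - A` for the adjacency matrix `A` of the functional graph of `s`. Its determinant is `1` when
`s` sends `u ↦ v` (or `v ↦ u`) and every other vertex to `i`, and `0` when `s` has the cycle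
`u ⇄ v`. As `g` ignores row `v` and `h` ignores row `u`, the value `0` at the cycle would equal
`g(u ↦ v) * h(v ↦ u) ≠ 0`.
-/

open MvPolynomial

/-- The generic Laplacian matrix in independent indeterminates `x_{ij}` (`i ≠ j`):
off-diagonal entries `-x_{ij}`, diagonal entries `∑_{j≠i} x_{ij}`. -/
noncomputable def genericLaplacian (n : ℕ) :
    Matrix (Fin n) (Fin n) (MvPolynomial {ij : Fin n × Fin n // ij.1 ≠ ij.2} ℚ) :=
  fun i j =>
    if h : i = j then
      ∑ k : {k : Fin n // k ≠ i}, X ⟨(i, k.1), Ne.symm k.2⟩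
    else
      - X ⟨(i, j), h⟩

namespace MvPolynomial

variable {σ R : Type*}

section CommSemiring

variable [CommSemiring R] (w : σ → ℕ)

theorem le_weightedTotalDegree_of_mem_vars {p : MvPolynomial σ R} {e : σ} (he : e ∈ p.vars) :
    w e ≤ weightedTotalDegree w p := by
  obtain ⟨d, hd, hed⟩ := (mem_vars_iff_mem_support e).mp he
  exact (Finsupp.le_weight_of_ne_zero' w (Finsupp.mem_support_iff.mp hed)).trans
    (le_weightedTotalDegree w hd)

theorem eval_congr_of_weightedTotalDegree_eq_zero {p : MvPolynomial σ R}
    (hp : weightedTotalDegree w p = 0) {x₁ x₂ : σ → R} (hx : ∀ e, w e = 0 → x₁ e = x₂ e) :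
    eval x₁ p = eval x₂ p :=
  hom_congr_vars (by ext; simp) (fun e he _ => by
    simpa using hx e (by have := le_weightedTotalDegree_of_mem_vars w he; omega)) rfl

theorem eq_C_of_forall_weightedTotalDegree_eq_zero {ι : Type*} (w : ι → σ → ℕ)
    (hw : ∀ e, ∃ k, w k e ≠ 0) {p : MvPolynomial σ R} (hp : ∀ k, weightedTotalDegree (w k) p = 0) :
    p = C (coeff 0 p) :=
  vars_eq_empty_iff_eq_C.mp <| Finset.eq_empty_of_forall_notMem fun e he => by
    obtain ⟨k, hk⟩ := hw e
    have := le_weightedTotalDegree_of_mem_vars (w k) he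
    have := hp k
    omega

theorem weightedHomogeneousComponent_weightedTotalDegree_ne_zero {p : MvPolynomial σ R}
    (hp : p ≠ 0) : weightedHomogeneousComponent w (weightedTotalDegree w p) p ≠ 0 := by
  obtain ⟨m, hm, hmax⟩ :=
    Finset.exists_mem_eq_sup p.support (support_nonempty.mpr hp) (Finsupp.weight w)
  intro h
  have := congr_arg (coeff m) h
  rw [coeff_weightedHomogeneousComponent, weightedTotalDegree, hmax, if_pos rfl,
    coeff_zero] at this
  exact mem_support_iff.mp hm this

theorem coeff_mul_of_weight_eq_add_weightedTotalDegree (p q : MvPolynomial σ R)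
    {m : σ →₀ ℕ} (hm : Finsupp.weight w m = weightedTotalDegree w p + weightedTotalDegree w q) :
    coeff m (p * q) = coeff m (weightedHomogeneousComponent w (weightedTotalDegree w p) p *
      weightedHomogeneousComponent w (weightedTotalDegree w q) q) := by
  classical
  simp only [coeff_mul, coeff_weightedHomogeneousComponent]
  refine Finset.sum_congr rfl fun x hx => ?_
  by_cases htop : Finsupp.weight w x.1 = weightedTotalDegree w p ∧
      Finsupp.weight w x.2 = weightedTotalDegree w q
  · rw [if_pos htop.1, if_pos htop.2]
  · have hsum : Finsupp.weight w x.1 + Finsupp.weight w x.2 =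
        weightedTotalDegree w p + weightedTotalDegree w q := by
      rw [← map_add, Finset.HasAntidiagonal.mem_antidiagonal.mp hx, hm]
    have hzero : coeff x.1 p * coeff x.2 q = 0 := by
      by_contra h0
      have h1 := le_weightedTotalDegree w (mem_support_iff.mpr (left_ne_zero_of_mul h0))
      have h2 := le_weightedTotalDegree w (mem_support_iff.mpr (right_ne_zero_of_mul h0))
      exact htop ⟨by omega, by omega⟩
    rw [hzero]
    split_ifs <;> simp_all

end CommSemiring

theorem weightedTotalDegree_mul_of_isDomain [CommRing R] [IsDomain R] (w : σ → ℕ)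
    {p q : MvPolynomial σ R} (hp : p ≠ 0) (hq : q ≠ 0) :
    weightedTotalDegree w (p * q) = weightedTotalDegree w p + weightedTotalDegree w q := by
  classical
  refine le_antisymm (Finset.sup_le fun d hd => ?_) ?_
  · obtain ⟨a, ha, b, hb, rfl⟩ := Finset.mem_add.mp (support_mul p q hd)
    rw [map_add]
    exact add_le_add (le_weightedTotalDegree w ha) (le_weightedTotalDegree w hb)
  · obtain ⟨m, hm⟩ := exists_coeff_ne_zero (mul_ne_zero
      (weightedHomogeneousComponent_weightedTotalDegree_ne_zero w hp)
      (weightedHomogeneousComponent_weightedTotalDegree_ne_zero w hq))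
    have hwm := ((weightedHomogeneousComponent_isWeightedHomogeneous _ p).mul
      (weightedHomogeneousComponent_isWeightedHomogeneous _ q)) hm
    rw [← hwm]
    exact le_weightedTotalDegree w
      (mem_support_iff.mpr (by rwa [coeff_mul_of_weight_eq_add_weightedTotalDegree w p q hwm]))

end MvPolynomial

theorem Matrix.isWeightedHomogeneous_det {ι σ R : Type*} [Fintype ι] [DecidableEq ι]
    [CommRing R] {w : σ → ℕ} {M : Matrix ι ι (MvPolynomial σ R)} {d : ι → ℕ}
    (hM : ∀ x y, IsWeightedHomogeneous w (M x y) (d x)) :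
    IsWeightedHomogeneous w M.det (∑ x, d x) := by
  rw [Matrix.det_apply]
  refine IsWeightedHomogeneous.sum _ _ _ fun τ _ => ?_
  rw [Units.smul_def, ← mem_weightedHomogeneousSubmodule]
  refine zsmul_mem ?_ _
  rw [mem_weightedHomogeneousSubmodule, ← Equiv.sum_comp τ d]
  exact IsWeightedHomogeneous.prod _ _ _ fun x _ => hM (τ x) x

namespace GenericLaplacian

variable {n : ℕ}

abbrev OffDiag (n : ℕ) := {ij : Fin n × Fin n // ij.1 ≠ ij.2}

noncomputable def minorDet (n : ℕ) (i : Fin n) :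
    MvPolynomial (OffDiag n) ℚ :=
  ((genericLaplacian n).submatrix (fun x : {x : Fin n // x ≠ i} => x.1)
    (fun x : {x : Fin n // x ≠ i} => x.1)).det

def rowWeight (k : Fin n) (e : OffDiag n) : ℕ :=
  if e.1.1 = k then 1 else 0

noncomputable abbrev rowDegree (k : Fin n) (p : MvPolynomial (OffDiag n) ℚ) : ℕ :=
  weightedTotalDegree (rowWeight k) p

theorem isWeightedHomogeneous_genericLaplacian (k x y : Fin n) :
    IsWeightedHomogeneous (rowWeight k) (genericLaplacian n x y) (if x = k then 1 else 0) := by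
  by_cases hxy : x = y
  · rw [genericLaplacian, dif_pos hxy]
    exact IsWeightedHomogeneous.sum _ _ _ fun j _ => isWeightedHomogeneous_X ℚ (rowWeight k) _
  · rw [genericLaplacian, dif_neg hxy]
    exact (isWeightedHomogeneous_X ℚ (rowWeight k) _).neg

theorem isWeightedHomogeneous_minorDet (i k : Fin n) :
    IsWeightedHomogeneous (rowWeight k) (minorDet n i) (if k = i then 0 else 1) := by
  have hsum : (∑ x : {x : Fin n // x ≠ i}, if x.1 = k then 1 else 0) = if k = i then 0 else 1 := by
    rw [← Finset.sum_subtype (Finset.univ.erase i) (by simp) (fun x => if x = k then 1 else 0)]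
    simp [eq_comm]
  rw [← hsum]
  exact Matrix.isWeightedHomogeneous_det fun x y => isWeightedHomogeneous_genericLaplacian k x y

theorem isUnit_of_forall_rowDegree_eq_zero {p : MvPolynomial (OffDiag n) ℚ}
    (hp : p ≠ 0) (h : ∀ k, rowDegree k p = 0) : IsUnit p := by
  rw [eq_C_of_forall_weightedTotalDegree_eq_zero rowWeight
    (fun e => ⟨e.1.1, by simp [rowWeight]⟩) h] at hp ⊢
  exact (isUnit_iff_ne_zero.mpr fun h0 => hp (by rw [h0, map_zero])).map C

theorem genericLaplacian_map_eval (A : Matrix (Fin n) (Fin n) ℚ) :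
    (genericLaplacian n).map (eval fun e => A e.1.1 e.1.2) =
      Matrix.diagonal (fun j => ∑ k, A j k) - A := by
  ext x y
  by_cases hxy : x = y
  · subst hxy
    have hsum : ∑ k : {k : Fin n // k ≠ x}, A x k = ∑ k, A x k - A x x := by
      rw [← Finset.sum_subtype (Finset.univ.erase x) (by simp) (A x),
        Finset.sum_erase_eq_sub (Finset.mem_univ x)]
    simpa [genericLaplacian] using hsum
  · simp [genericLaplacian, hxy]

theorem eval_minorDet (i : Fin n) (A : Matrix (Fin n) (Fin n) ℚ) :
    eval (fun e : OffDiag n => A e.1.1 e.1.2) (minorDet n i) =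
      (((Matrix.diagonal fun j => ∑ k, A j k) - A).submatrix (fun x : {x // x ≠ i} => x.1)
        (fun x : {x // x ≠ i} => x.1)).det := by
  rw [minorDet, RingHom.map_det, RingHom.mapMatrix_apply, ← Matrix.submatrix_map,
    genericLaplacian_map_eval]

def funGraphAdj (s : Fin n → Fin n) : Matrix (Fin n) (Fin n) ℚ :=
  Matrix.of fun j k => if k = s j then 1 else 0

theorem eval_minorDet_funGraphAdj (i : Fin n) (s : Fin n → Fin n) :
    eval (fun e : OffDiag n => funGraphAdj s e.1.1 e.1.2)
      (minorDet n i) =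
      (1 - (funGraphAdj s).submatrix (fun x : {x // x ≠ i} => x.1)
        (fun x : {x // x ≠ i} => x.1)).det := by
  have hrow : (Matrix.diagonal fun j => ∑ k, funGraphAdj s j k) = 1 := by simp [funGraphAdj]
  rw [eval_minorDet, hrow]
  congr 1
  ext x y
  simp [Matrix.one_apply, Subtype.ext_iff]

theorem eval_funGraphAdj_congr_of_rowDegree_eq_zero {k : Fin n}
    {p : MvPolynomial (OffDiag n) ℚ} (hp : rowDegree k p = 0)
    {s t : Fin n → Fin n} (hst : ∀ j ≠ k, s j = t j) :
    eval (fun e => funGraphAdj s e.1.1 e.1.2) p = eval (fun e => funGraphAdj t e.1.1 e.1.2) p :=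
  eval_congr_of_weightedTotalDegree_eq_zero _ hp fun e he => by
    simp only [funGraphAdj, Matrix.of_apply, hst e.1.1 (by simpa [rowWeight] using he)]

theorem minorDet_ne_zero (i : Fin n) : minorDet n i ≠ 0 := by
  have hadj : (funGraphAdj fun _ => i).submatrix (fun x : {x // x ≠ i} => x.1)
      (fun x : {x // x ≠ i} => x.1) = 0 := by
    ext x y
    simp [funGraphAdj, y.2]
  intro h
  have := eval_minorDet_funGraphAdj i fun _ => i
  rw [h, map_zero, hadj, sub_zero, Matrix.det_one] at this
  exact zero_ne_one this

theorem not_isUnit_minorDet (hn : 2 ≤ n) (i : Fin n) : ¬IsUnit (minorDet n i) := by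
  have : Nontrivial (Fin n) := Fin.nontrivial_iff_two_le.mpr hn
  have : Nonempty {x : Fin n // x ≠ i} := nonempty_subtype.mpr (exists_ne i)
  intro hu
  have := hu.map (eval fun e : OffDiag n =>
    (0 : Matrix (Fin n) (Fin n) ℚ) e.1.1 e.1.2)
  rw [eval_minorDet] at this
  simp at this

theorem det_one_sub_funGraphAdj_update_submatrix {i u v : Fin n} (hu : u ≠ i) (hv : v ≠ i)
    (huv : u ≠ v) :
    (1 - (funGraphAdj (Function.update (fun _ => i) u v)).submatrix
      (fun x : {x // x ≠ i} => x.1) (fun x => x.1)).det = 1 := by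
  have hU : (⟨u, hu⟩ : {x // x ≠ i}) ≠ ⟨v, hv⟩ := fun h => huv (congrArg Subtype.val h)
  convert Matrix.det_transvection_of_ne _ _ hU (-1 : ℚ) using 2
  ext ⟨x, hx⟩ ⟨y, hy⟩
  by_cases hxu : x = u <;> by_cases hyv : y = v <;>
    simp [funGraphAdj, Matrix.transvection, Matrix.single_apply, Matrix.one_apply,
      Function.update_apply, hxu, hyv, hy, sub_eq_add_neg, hv] <;> grind

/-- The cycle `u ⇄ v` avoiding `i` gives the kernel vector `𝟙_u + 𝟙_v`. -/
theorem det_one_sub_funGraphAdj_swap_submatrix {i u v : Fin n} (hu : u ≠ i) (hv : v ≠ i)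
    (huv : u ≠ v) :
    (1 - (funGraphAdj (Function.update (Function.update (fun _ => i) u v) v u)).submatrix
      (fun x : {x // x ≠ i} => x.1) (fun x => x.1)).det = 0 := by
  rw [← Matrix.exists_mulVec_eq_zero_iff]
  refine ⟨Pi.single ⟨u, hu⟩ 1 + Pi.single ⟨v, hv⟩ 1, fun h => ?_, ?_⟩
  · have := congrFun h ⟨u, hu⟩
    simp [huv] at this
  · ext ⟨x, hx⟩
    by_cases hxu : x = u <;> by_cases hxv : x = v <;>
      simp [Matrix.mulVec_add, funGraphAdj, Function.update_apply, hxu, hxv, huv, Ne.symm huv,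
        hu, hv]

theorem minorDet_ne_mul_of_rowDegree_eq_zero {i u v : Fin n} (hu : u ≠ i) (hv : v ≠ i)
    (huv : u ≠ v) {g h : MvPolynomial (OffDiag n) ℚ}
    (hg : rowDegree v g = 0) (hh : rowDegree u h = 0) : minorDet n i ≠ g * h := by
  intro hgh
  have heval (s : Fin n → Fin n) :
      (1 - (funGraphAdj s).submatrix (fun x : {x // x ≠ i} => x.1)
        (fun x : {x // x ≠ i} => x.1)).det =
        eval (fun e => funGraphAdj s e.1.1 e.1.2) g *
          eval (fun e => funGraphAdj s e.1.1 e.1.2) h := by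
    rw [← eval_minorDet_funGraphAdj, hgh, map_mul]
  have h₀ := heval (Function.update (Function.update (fun _ => i) u v) v u)
  have h₁ := heval (Function.update (fun _ => i) u v)
  have h₂ := heval (Function.update (fun _ => i) v u)
  rw [det_one_sub_funGraphAdj_swap_submatrix hu hv huv] at h₀
  rw [det_one_sub_funGraphAdj_update_submatrix hu hv huv] at h₁
  rw [det_one_sub_funGraphAdj_update_submatrix hv hu huv.symm] at h₂
  rw [eval_funGraphAdj_congr_of_rowDegree_eq_zero hg (t := Function.update (fun _ => i) u v)
      fun j hj => Function.update_of_ne hj _ _,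
    eval_funGraphAdj_congr_of_rowDegree_eq_zero hh (t := Function.update (fun _ => i) v u)
      fun j hj => by simp [Function.update_apply, hj]] at h₀
  rcases mul_eq_zero.mp h₀.symm with h0 | h0
  · simp [h0] at h₁
  · simp [h0] at h₂

theorem rowDegree_add_le_of_minorDet_eq_mul {i : Fin n}
    {g h : MvPolynomial (OffDiag n) ℚ} (hgh : minorDet n i = g * h)
    (k : Fin n) : rowDegree k g + rowDegree k h ≤ if k = i then 0 else 1 := by
  have hf := minorDet_ne_zero i
  rw [rowDegree, rowDegree, ← weightedTotalDegree_mul_of_isDomain _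
    (left_ne_zero_of_mul (hgh ▸ hf)) (right_ne_zero_of_mul (hgh ▸ hf)), ← hgh]
  exact Finset.sup_le fun _ hd => (isWeightedHomogeneous_minorDet i k (mem_support_iff.mp hd)).le

theorem minorDet_ne_mul_of_rowDegree_ne_zero {i u v : Fin n}
    {g h : MvPolynomial (OffDiag n) ℚ}
    (hg : rowDegree u g ≠ 0) (hh : rowDegree v h ≠ 0) : minorDet n i ≠ g * h := by
  intro hgh
  have hdu := rowDegree_add_le_of_minorDet_eq_mul hgh u
  have hdv := rowDegree_add_le_of_minorDet_eq_mul hgh v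
  have hui : u ≠ i := by rintro rfl; rw [if_pos rfl] at hdu; omega
  have hvi : v ≠ i := by rintro rfl; rw [if_pos rfl] at hdv; omega
  rw [if_neg hui] at hdu
  rw [if_neg hvi] at hdv
  have huv : u ≠ v := by rintro rfl; omega
  exact minorDet_ne_mul_of_rowDegree_eq_zero hui hvi huv (by omega) (by omega) hgh

end GenericLaplacian

open GenericLaplacian

/-- The principal minor of the generic Laplacian obtained by deleting row and column `i`
has irreducible determinant in `ℚ[x_{jk} : j ≠ k]`. -/
theorem genericLaplacian_minor_det_irreducible (n : ℕ) (hn : 2 ≤ n) (i : Fin n) :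
    Irreducible (Matrix.det ((genericLaplacian n).submatrix
      (fun x : {x : Fin n // x ≠ i} => x.1) (fun x : {x : Fin n // x ≠ i} => x.1))) := by
  change Irreducible (minorDet n i)
  refine ⟨not_isUnit_minorDet hn i, fun g h hgh => ?_⟩
  have hg : g ≠ 0 := left_ne_zero_of_mul (hgh ▸ minorDet_ne_zero i)
  have hh : h ≠ 0 := right_ne_zero_of_mul (hgh ▸ minorDet_ne_zero i)
  by_contra! hred
  obtain ⟨u, hu⟩ : ∃ u, rowDegree u g ≠ 0 := by
    by_contra! h0
    exact hred.1 (isUnit_of_forall_rowDegree_eq_zero hg h0)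
  obtain ⟨v, hv⟩ : ∃ v, rowDegree v h ≠ 0 := by
    by_contra! h0
    exact hred.2 (isUnit_of_forall_rowDegree_eq_zero hh h0)
  exact minorDet_ne_mul_of_rowDegree_ne_zero hu hv hgh
end
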